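/- There exists a constant C such that for all real x ≥ 2, |∑_{p prime, p ≤ x} 1/p − log(log x)| ≤ C. (Mertens' second theorem in bounded-error form.) -/

import Mathlib

/-!
Write `M(n) = ∑_{p ≤ n} log p / p`. Comparing Legendre's formula
`log n! = ∑_{p ≤ n} v_p(n!) log p` with `n/p - 1 < v_p(n!) ≤ n/(p-1)`, with `θ(n) ≤ n log 4` and
with `n log n - n ≤ log n! ≤ n log n` gives Mertens' first theorem `M(n) = log n + O(1)`; the gap
between `n/(p-1)` and `n/p` costs only the convergent series `∑ log k / k²`.
Abel summation against `1/log t` turns this into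
`∑_{p ≤ x} 1/p = M(x)/log x + ∫_{3/2}^x M(t) / (t log² t) dt`, and replacing `M(t)` by `log t`
costs at most `O(1) · ∫_{3/2}^∞ dt / (t log² t) < ∞`, while `∫ dt / (t log t) = log log x + O(1)`.
-/

open Nat hiding log
open Real Finset MeasureTheory intervalIntegral

noncomputable def logDivPrimeSum (n : ℕ) : ℝ := ∑ p ∈ primesLE n, log p / p

lemma log_factorial_eq_sum_primesLE (n : ℕ) :
    log (n ! : ℝ) = ∑ p ∈ primesLE n, ((n !).factorization p : ℝ) * log p := by
  rw [log_nat_eq_sum_factorization, Finsupp.sum_of_support_subset _ _ _ (by simp)]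
  intro p hp
  rw [support_factorization, mem_primeFactors] at hp
  exact mem_primesLE.2 ⟨(hp.1.dvd_factorial).1 hp.2.1, hp.1⟩

lemma log_factorial_le_mul_log (n : ℕ) : log (n ! : ℝ) ≤ n * log n :=
  calc log (n ! : ℝ) ≤ log ((n : ℝ) ^ n) := by gcongr; exact_mod_cast factorial_le_pow n
    _ = n * log n := log_pow n n

lemma mul_log_sub_one_le_log_factorial (n : ℕ) : n * (log n - 1) ≤ log (n ! : ℝ) := by
  rcases n.eq_zero_or_pos with rfl | hn
  · simp
  have := Stirling.le_log_factorial_stirling hn.ne'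
  have : 0 ≤ log n := log_natCast_nonneg n
  have : 0 ≤ log (2 * π) := log_nonneg (by linarith [pi_gt_three])
  rw [mul_sub, mul_one]
  linarith

lemma div_le_factorization_factorial {p : ℕ} (hp : p.Prime) (n : ℕ) :
    n / p ≤ (n !).factorization p :=
  calc n / p ≤ ((n / p)!).factorization p + n / p := le_add_self
    _ = ((p * (n / p))!).factorization p := (factorization_factorial_mul hp).symm
    _ ≤ (n !).factorization p :=
      (factorization_le_iff_dvd (factorial_ne_zero _) (factorial_ne_zero _)).2
        (factorial_dvd_factorial (mul_div_le n p)) p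

lemma logDivPrimeSum_le (n : ℕ) : logDivPrimeSum n ≤ log n + log 4 := by
  rcases n.eq_zero_or_pos with rfl | hn
  · simp [logDivPrimeSum, log_nonneg]
  have hn : (0 : ℝ) < n := by exact_mod_cast hn
  suffices n * logDivPrimeSum n ≤ n * (log n + log 4) from le_of_mul_le_mul_left this hn
  have hterm : ∀ p ∈ primesLE n,
      n * (log p / p) ≤ ((n !).factorization p : ℝ) * log p + log p := by
    intro p hp
    have hp := prime_of_mem_primesLE hp
    have hfloor : (n : ℝ) / p < (n / p : ℕ) + 1 := by
      rw [← Nat.floor_div_eq_div (K := ℝ)]; exact lt_floor_add_one _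
    have hfac : ((n / p : ℕ) : ℝ) ≤ (n !).factorization p := by
      exact_mod_cast div_le_factorization_factorial hp n
    have := log_nonneg (by exact_mod_cast hp.one_lt.le : (1 : ℝ) ≤ p)
    calc n * (log p / p) = n / p * log p := by ring
      _ ≤ (((n !).factorization p : ℝ) + 1) * log p := by gcongr; linarith
      _ = _ := by ring
  calc n * logDivPrimeSum n
        ≤ ∑ p ∈ primesLE n, (((n !).factorization p : ℝ) * log p + log p) := by
        rw [logDivPrimeSum, mul_sum]; exact sum_le_sum hterm
    _ = log (n ! : ℝ) + Chebyshev.theta n := by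
        rw [sum_add_distrib, log_factorial_eq_sum_primesLE, Chebyshev.theta_eq_sum_primesLE_log]
    _ ≤ n * log n + log 4 * n := by
        gcongr
        · exact log_factorial_le_mul_log n
        · exact Chebyshev.theta_le_log4_mul_x hn.le
    _ = _ := by ring

lemma factorization_factorial_mul_log_le {p : ℕ} (hp : p.Prime) (n : ℕ) :
    ((n !).factorization p : ℝ) * log p ≤ n * (log p / p + 2 * (log p / p ^ 2)) := by
  have hp2 : (2 : ℝ) ≤ p := by exact_mod_cast hp.two_le
  have hlog := log_nonneg (by linarith : (1 : ℝ) ≤ p)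
  have hfac : ((n !).factorization p : ℝ) ≤ n / (p - 1) := by
    calc ((n !).factorization p : ℝ) ≤ (n / (p - 1) : ℕ) := by
          exact_mod_cast factorization_factorial_le_div_pred hp n
      _ ≤ (n : ℝ) / (p - 1 : ℕ) := cast_div_le
      _ = n / (p - 1) := by rw [cast_sub hp.one_le, cast_one]
  have hinv : 1 / ((p : ℝ) - 1) ≤ 1 / p + 2 / p ^ 2 := by
    rw [div_add_div _ _ (by positivity) (by positivity),
      div_le_div_iff₀ (by linarith) (by positivity)]
    nlinarith
  calc ((n !).factorization p : ℝ) * log p ≤ n / (p - 1) * log p := by gcongr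
    _ = n * log p * (1 / ((p : ℝ) - 1)) := by ring
    _ ≤ n * log p * (1 / p + 2 / p ^ 2) := by gcongr
    _ = _ := by ring

lemma summable_log_div_sq : Summable fun n : ℕ ↦ log n / n ^ 2 := by
  refine (summable_nat_rpow.2 (by norm_num : (-3 / 2 : ℝ) < -1)).mul_left 2
    |>.of_nonneg_of_le (fun n ↦ by positivity) fun n ↦ ?_
  rcases n.eq_zero_or_pos with rfl | hn
  · simp
  have hn : (0 : ℝ) < n := by exact_mod_cast hn
  calc log n / n ^ 2 ≤ (n : ℝ) ^ (1 / 2 : ℝ) / (1 / 2) / n ^ 2 := by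
        gcongr; exact log_le_rpow_div hn.le (by norm_num)
    _ = 2 * (n : ℝ) ^ (-3 / 2 : ℝ) := by
        rw [show (-3 / 2 : ℝ) = 1 / 2 - (2 : ℕ) by norm_num, rpow_sub hn, rpow_natCast]
        ring

lemma log_sub_le_logDivPrimeSum (n : ℕ) :
    log n - 1 - 2 * ∑' k : ℕ, log k / k ^ 2 ≤ logDivPrimeSum n := by
  have htail_nonneg : 0 ≤ ∑' k : ℕ, log k / k ^ 2 := tsum_nonneg fun k ↦ by positivity
  rcases n.eq_zero_or_pos with rfl | hn
  · simp [logDivPrimeSum]; linarith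
  have hn : (0 : ℝ) < n := by exact_mod_cast hn
  have htail : ∑ p ∈ primesLE n, log p / p ^ 2 ≤ ∑' k : ℕ, log k / k ^ 2 :=
    summable_log_div_sq.sum_le_tsum _ fun k _ ↦ by positivity
  suffices n * (log n - 1) ≤ n * (logDivPrimeSum n + 2 * ∑ p ∈ primesLE n, log p / p ^ 2) by
    linarith [le_of_mul_le_mul_left this hn]
  calc n * (log n - 1) ≤ log (n ! : ℝ) := mul_log_sub_one_le_log_factorial n
    _ ≤ ∑ p ∈ primesLE n, n * (log p / p + 2 * (log p / p ^ 2)) := by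
        rw [log_factorial_eq_sum_primesLE]
        exact sum_le_sum fun p hp ↦ factorization_factorial_mul_log_le (prime_of_mem_primesLE hp) n
    _ = _ := by rw [logDivPrimeSum, ← mul_sum, sum_add_distrib, mul_sum]

lemma abs_logDivPrimeSum_floor_sub_log_le {t : ℝ} (ht : 1 ≤ t) :
    |logDivPrimeSum ⌊t⌋₊ - log t| ≤ log 4 + 1 + 2 * ∑' k : ℕ, log k / k ^ 2 := by
  have hfloor : (1 : ℝ) ≤ ⌊t⌋₊ := by exact_mod_cast Nat.one_le_floor_iff _ |>.2 ht
  have hlog_le : log ⌊t⌋₊ ≤ log t := log_le_log (by linarith) (Nat.floor_le (by linarith))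
  have hlog_ge : log t ≤ log 2 + log ⌊t⌋₊ := by
    rw [← log_mul two_ne_zero (by linarith)]
    exact log_le_log (by linarith) (by linarith [Nat.lt_floor_add_one t])
  have hlog2 : log 2 ≤ log 4 := log_le_log two_pos (by norm_num)
  have htail : 0 ≤ ∑' k : ℕ, log k / k ^ 2 := tsum_nonneg fun k ↦ by positivity
  have := logDivPrimeSum_le ⌊t⌋₊
  have := log_sub_le_logDivPrimeSum ⌊t⌋₊
  rw [abs_le]
  constructor <;> linarith [log_nonneg (by norm_num : (1 : ℝ) ≤ 4)]

lemma hasDerivAt_inv_log {t : ℝ} (ht : 1 < t) :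
    HasDerivAt (fun u ↦ (log u)⁻¹) (-(t * log t ^ 2)⁻¹) t := by
  refine ((hasDerivAt_log (by linarith)).inv (log_pos ht).ne').congr_deriv ?_
  rw [mul_inv, neg_div, div_eq_mul_inv]

lemma hasDerivAt_log_log {t : ℝ} (ht : 1 < t) :
    HasDerivAt (fun u ↦ log (log u)) ((t * log t ^ 2)⁻¹ * log t) t := by
  refine ((hasDerivAt_log (by linarith)).log (log_pos ht).ne').congr_deriv ?_
  have := (log_pos ht).ne'
  field_simp

lemma continuousOn_inv_mul_log_sq {s : Set ℝ} (hs : ∀ t ∈ s, 1 < t) :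
    ContinuousOn (fun t ↦ (t * log t ^ 2)⁻¹) s := by
  refine (continuousOn_id.mul ((continuousOn_log.mono fun t ht ↦ ?_).pow 2)).inv₀ fun t ht ↦ ?_
  · exact (zero_lt_one.trans (hs t ht)).ne'
  · exact mul_ne_zero (zero_lt_one.trans (hs t ht)).ne' (pow_ne_zero _ (log_pos (hs t ht)).ne')

lemma abs_integral_inv_mul_log_sq_mul_sub_log_log_le {g : ℝ → ℝ} {a x B : ℝ} (ha : 1 < a)
    (hax : a ≤ x) (hg : ∀ t ∈ Set.Icc a x, |g t - log t| ≤ B)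
    (hint : IntervalIntegrable (fun t ↦ (t * log t ^ 2)⁻¹ * g t) volume a x) :
    |(∫ t in a..x, (t * log t ^ 2)⁻¹ * g t) - (log (log x) - log (log a))| ≤ B / log a := by
  have hgt : ∀ t ∈ Set.uIcc a x, 1 < t := fun t ht ↦ by
    rw [Set.uIcc_of_le hax] at ht; linarith [ht.1]
  have hw := continuousOn_inv_mul_log_sq hgt
  have hlog : ContinuousOn log (Set.uIcc a x) :=
    continuousOn_log.mono fun t ht ↦ (zero_lt_one.trans (hgt t ht)).ne'
  have hwlog : IntervalIntegrable (fun t ↦ (t * log t ^ 2)⁻¹ * log t) volume a x :=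
    (hw.mul hlog).intervalIntegrable
  have hloglog : ∫ t in a..x, (t * log t ^ 2)⁻¹ * log t = log (log x) - log (log a) :=
    integral_eq_sub_of_hasDerivAt (fun t ht ↦ hasDerivAt_log_log (hgt t ht)) hwlog
  have hw_integral : ∫ t in a..x, (t * log t ^ 2)⁻¹ = (log a)⁻¹ - (log x)⁻¹ := by
    rw [integral_eq_sub_of_hasDerivAt (f := fun u ↦ -(log u)⁻¹)
      (fun t ht ↦ by simpa using (hasDerivAt_inv_log (hgt t ht)).fun_neg) hw.intervalIntegrable]
    ring
  have hB : 0 ≤ B := (abs_nonneg _).trans (hg a ⟨le_rfl, hax⟩)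
  have hlogx : 0 ≤ (log x)⁻¹ := inv_nonneg.2 (log_nonneg (by linarith))
  rw [← hloglog, ← integral_sub hint hwlog, ← Real.norm_eq_abs]
  calc ‖∫ t in a..x, ((t * log t ^ 2)⁻¹ * g t - (t * log t ^ 2)⁻¹ * log t)‖
      ≤ ∫ t in a..x, (t * log t ^ 2)⁻¹ * B := by
        refine norm_integral_le_of_norm_le hax (ae_of_all _ fun t ht ↦ ?_)
          (hw.intervalIntegrable.mul_const B)
        have ht1 : 1 < t := by linarith [ht.1]
        have := log_pos ht1
        rw [← mul_sub, norm_mul, Real.norm_eq_abs, abs_of_pos (by positivity)]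
        gcongr
        exact hg t (Set.Ioc_subset_Icc_self ht)
    _ = ((log a)⁻¹ - (log x)⁻¹) * B := by rw [intervalIntegral.integral_mul_const, hw_integral]
    _ ≤ B / log a := by rw [div_eq_inv_mul]; nlinarith

lemma logDivPrimeSum_eq_sum_Icc (n : ℕ) :
    logDivPrimeSum n = ∑ k ∈ Icc 0 n, if k.Prime then log k / k else 0 := by
  rw [logDivPrimeSum, primesLE_eq_filter_Icc_zero, sum_filter]

lemma logDivPrimeSum_one : logDivPrimeSum 1 = 0 := by simp [logDivPrimeSum]

lemma sum_primesLE_one_div_eq_sum_Ioc (n : ℕ) :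
    ∑ p ∈ primesLE n, (1 : ℝ) / p =
      ∑ k ∈ Ioc 1 n, (log k)⁻¹ * if k.Prime then log k / k else 0 := by
  have : primesLE n = {k ∈ Ioc 1 n | k.Prime} := by
    ext k
    simp only [mem_primesLE, mem_filter, mem_Ioc]
    exact ⟨fun h ↦ ⟨⟨h.2.one_lt, h.1⟩, h.2⟩, fun h ↦ ⟨h.1.2, h.2⟩⟩
  rw [this, sum_filter]
  refine sum_congr rfl fun k hk ↦ ?_
  split_ifs
  · have : log k ≠ 0 := (Real.log_pos (by exact_mod_cast (mem_Ioc.1 hk).1)).ne'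
    field_simp
  · rw [mul_zero]

lemma sum_primesLE_one_div_eq_integral {a x : ℝ} (ha : 1 < a) (ha2 : a < 2) (hax : a ≤ x) :
    IntervalIntegrable (fun t ↦ (t * log t ^ 2)⁻¹ * logDivPrimeSum ⌊t⌋₊) volume a x ∧
    ∑ p ∈ primesLE ⌊x⌋₊, (1 : ℝ) / p =
      logDivPrimeSum ⌊x⌋₊ / log x + ∫ t in a..x, (t * log t ^ 2)⁻¹ * logDivPrimeSum ⌊t⌋₊ := by
  set c : ℕ → ℝ := fun k ↦ if k.Prime then log k / k else 0
  have hgt : ∀ t ∈ Set.Icc a x, 1 < t := fun t ht ↦ ha.trans_le ht.1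
  have hw := continuousOn_inv_mul_log_sq hgt
  have hderiv : Set.EqOn (deriv fun u ↦ (log u)⁻¹) (fun t ↦ -(t * log t ^ 2)⁻¹) (Set.Icc a x) :=
    fun t ht ↦ (hasDerivAt_inv_log (hgt t ht)).deriv
  have hint := integrableOn_mul_sum_Icc c (m := 0) (by linarith) hw.integrableOn_Icc
  have habel := sum_mul_eq_sub_sub_integral_mul c (f := fun u ↦ (log u)⁻¹) (by linarith) hax
    (fun t ht ↦ (hasDerivAt_inv_log (hgt t ht)).differentiableAt)
    ((hw.integrableOn_Icc.neg).congr_fun hderiv.symm measurableSet_Icc)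
  simp only [c, ← logDivPrimeSum_eq_sum_Icc] at hint habel
  refine ⟨(intervalIntegrable_iff_integrableOn_Icc_of_le hax).2 hint, ?_⟩
  have hfloor : ⌊a⌋₊ = 1 :=
    Nat.floor_eq_iff (by linarith) |>.2 ⟨by simpa using ha.le, by norm_num; linarith⟩
  have hintegral : ∫ t in Set.Ioc a x, deriv (fun u ↦ (log u)⁻¹) t * logDivPrimeSum ⌊t⌋₊ =
      -∫ t in a..x, (t * log t ^ 2)⁻¹ * logDivPrimeSum ⌊t⌋₊ := by
    rw [integral_of_le hax, ← MeasureTheory.integral_neg]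
    refine setIntegral_congr_fun measurableSet_Ioc fun t ht ↦ ?_
    rw [hderiv (Set.Ioc_subset_Icc_self ht), neg_mul]
  rw [hfloor, ← sum_primesLE_one_div_eq_sum_Ioc, hintegral] at habel
  rw [habel, logDivPrimeSum_one, mul_zero, sub_zero, sub_neg_eq_add, inv_mul_eq_div]

lemma abs_div_log_sub_one_le {y x B : ℝ} (hx : 2 ≤ x) (h : |y - log x| ≤ B) :
    |y / log x - 1| ≤ B / log 2 := by
  have hlog2 : 0 < log 2 := log_pos one_lt_two
  have hlogx : log 2 ≤ log x := log_le_log two_pos hx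
  have hlogx_pos := hlog2.trans_le hlogx
  rw [← div_self hlogx_pos.ne', ← sub_div, abs_div, abs_of_pos hlogx_pos]
  calc |y - log x| / log x ≤ B / log x := div_le_div_of_nonneg_right h hlogx_pos.le
    _ ≤ B / log 2 := div_le_div_of_nonneg_left ((abs_nonneg _).trans h) hlog2 hlogx

theorem mertens_second_bounded :
    ∃ C : ℝ, ∀ x : ℝ, 2 ≤ x →
      |(∑ p ∈ (Finset.range (⌊x⌋₊ + 1)).filter Nat.Prime, (1 : ℝ) / p) -
        Real.log (Real.log x)| ≤ C := by
  set B := log 4 + 1 + 2 * ∑' k : ℕ, log k / k ^ 2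
  refine ⟨1 + B / log 2 + B / log (3 / 2) + |log (log (3 / 2))|, fun x hx ↦ ?_⟩
  obtain ⟨hint, hsum⟩ :=
    sum_primesLE_one_div_eq_integral (a := 3 / 2) (x := x) (by norm_num) (by norm_num) (by linarith)
  have hintegral := abs_integral_inv_mul_log_sq_mul_sub_log_log_le (by norm_num) (by linarith)
    (fun t ht ↦ abs_logDivPrimeSum_floor_sub_log_le (by linarith [ht.1])) hint
  have hboundary :=
    abs_div_log_sub_one_le hx (abs_logDivPrimeSum_floor_sub_log_le (t := x) (by linarith))
  rw [← primesLE_eq_filter_range, hsum]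
  rw [abs_le] at hintegral hboundary ⊢
  have := neg_abs_le (log (log (3 / 2)))
  have := le_abs_self (log (log (3 / 2)))
  constructor <;> linarith [hintegral.1, hintegral.2, hboundary.1, hboundary.2]
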